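/- Let g_x, g_v be real numbers and ρ_{x,j}, ρ_{v,j} (j = −2,…,2) real coefficients with ρ_{x,0} = ρ_{v,0} = 1 and Σ_{j=-2}^{2} ρ_{x,j} = Σ_{j=-2}^{2} ρ_{v,j} = 0. Define λ_x(φ) = g_x·Σ_{j=-2}^{2} ρ_{x,j} e^{iφj}, λ_v(φ) = g_v·Σ_{j=-2}^{2} ρ_{v,j} e^{iφj}, α_{x,1} = ρ_{x,1} + ρ_{x,−1}, β_{x,1} = ρ_{x,1} − ρ_{x,−1}, β_{x,2} = ρ_{x,2} − ρ_{x,−2}, β_{v,1} = ρ_{v,1} − ρ_{v,−1}, β_{v,2} = ρ_{v,2} − ρ_{v,−2}, s = β_{v,1} + 2β_{v,2}, and D = g_v²·s² − 2g_x·(4 + 3α_{x,1}). Assume β_{x,1} + 2β_{x,2} = 0 and D < 0. Then there exists ε > 0 such that for every φ with 0 < φ < ε there is a complex number ν with ν² − λ_v(φ)·ν − λ_x(φ) = 0 and Re ν > 0. -/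

import Mathlib

/-!
A root `ν = (b + w) / 2`, `w² = b² + 4c`, of `ν² − bν − c` has positive real part as soon as
`(Im b)² < 4 Re c`, since then `(Re w)² ≥ Re (w²) > (Re b)²`. Writing `sin` and `1 − cos` through
`sinc`, the condition `ρ(−2) + … + ρ 2 = 0` turns `4 Re λ_x(φ) − (Im λ_v(φ))²` into `φ² G(φ)` with
`G` continuous and `G 0 = −D > 0`.
-/

/-- The eigenvalue curve `λ(φ) = g·Σ_{j=-2}^{2} ρ_j e^{iφj}` of a circulant
next-nearest-neighbor Laplacian. -/
noncomputable def lam (g : ℝ) (ρ : ℤ → ℝ) (φ : ℝ) : ℂ :=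
  (g : ℂ) * ∑ j ∈ Finset.Icc (-2 : ℤ) 2,
    (ρ j : ℂ) * Complex.exp (Complex.I * (φ : ℂ) * (j : ℂ))

open Real

lemma sum_Icc_neg_two_two {M : Type*} [AddCommMonoid M] (f : ℤ → M) :
    ∑ j ∈ Finset.Icc (-2 : ℤ) 2, f j = f (-2) + f (-1) + f 0 + f 1 + f 2 := by
  rw [show Finset.Icc (-2 : ℤ) 2 = {-2, -1, 0, 1, 2} by decide]
  simp [add_assoc]

lemma sin_eq_mul_sinc (x : ℝ) : sin x = x * sinc x := by
  rcases eq_or_ne x 0 with rfl | hx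
  · simp
  · rw [sinc_of_ne_zero hx, mul_div_cancel₀ _ hx]

lemma cos_sub_one_eq_mul_sinc_sq (x : ℝ) : cos x - 1 = -(x ^ 2 / 2) * sinc (x / 2) ^ 2 := by
  have h := cos_two_mul_eq_one_sub (x / 2)
  rw [mul_div_cancel₀ _ two_ne_zero] at h
  rw [h, sin_eq_mul_sinc]
  ring

lemma lam_re (g : ℝ) (ρ : ℤ → ℝ) (φ : ℝ) :
    (lam g ρ φ).re = g * (ρ 0 + (ρ 1 + ρ (-1)) * cos φ + (ρ 2 + ρ (-2)) * cos (2 * φ)) := by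
  rw [lam, Complex.re_ofReal_mul, sum_Icc_neg_two_two]
  congr 1
  simp [Complex.exp_re, Complex.exp_im]
  ring_nf

lemma lam_im (g : ℝ) (ρ : ℤ → ℝ) (φ : ℝ) :
    (lam g ρ φ).im = g * ((ρ 1 - ρ (-1)) * sin φ + (ρ 2 - ρ (-2)) * sin (2 * φ)) := by
  rw [lam, Complex.im_ofReal_mul, sum_Icc_neg_two_two]
  congr 1
  simp [Complex.exp_re, Complex.exp_im]
  ring_nf

lemma exists_sq_eq_and_re_nonneg (z : ℂ) : ∃ w : ℂ, w ^ 2 = z ∧ 0 ≤ w.re := by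
  obtain ⟨w, hw⟩ := IsAlgClosed.exists_pow_nat_eq z two_pos
  rcases le_total 0 w.re with h | h
  · exact ⟨w, hw, h⟩
  · exact ⟨-w, by rw [neg_sq, hw], by simpa using h⟩

lemma exists_quadratic_root_re_pos_of_sq_im_lt (b c : ℂ) (h : b.im ^ 2 < 4 * c.re) :
    ∃ ν : ℂ, ν ^ 2 - b * ν - c = 0 ∧ 0 < ν.re := by
  obtain ⟨w, hw, hw0⟩ := exists_sq_eq_and_re_nonneg (b ^ 2 + 4 * c)
  have hre : w.re ^ 2 - w.im ^ 2 = b.re ^ 2 - b.im ^ 2 + 4 * c.re := by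
    simpa [sq] using congrArg Complex.re hw
  refine ⟨(b + w) / 2, by linear_combination hw / 4, ?_⟩
  have hlt : b.re ^ 2 < w.re ^ 2 := by nlinarith [sq_nonneg w.im]
  rw [Complex.div_ofNat_re, Complex.add_re]
  linarith [(abs_lt_of_sq_lt_sq' hlt hw0).1]

lemma lam_re_eq_of_sum_eq_zero (g : ℝ) {ρ : ℤ → ℝ} (hρ : ∑ j ∈ Finset.Icc (-2 : ℤ) 2, ρ j = 0)
    (φ : ℝ) : (lam g ρ φ).re =
      -g * φ ^ 2 * ((ρ 1 + ρ (-1)) / 2 * sinc (φ / 2) ^ 2 + 2 * (ρ 2 + ρ (-2)) * sinc φ ^ 2) := by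
  rw [sum_Icc_neg_two_two] at hρ
  have h₁ := cos_sub_one_eq_mul_sinc_sq φ
  have h₂ := cos_sub_one_eq_mul_sinc_sq (2 * φ)
  rw [mul_div_cancel_left₀ _ two_ne_zero] at h₂
  rw [lam_re]
  linear_combination g * (hρ + (ρ 1 + ρ (-1)) * h₁ + (ρ 2 + ρ (-2)) * h₂)

lemma lam_im_eq_mul_sinc (g : ℝ) (ρ : ℤ → ℝ) (φ : ℝ) : (lam g ρ φ).im =
    g * φ * ((ρ 1 - ρ (-1)) * sinc φ + 2 * (ρ 2 - ρ (-2)) * sinc (2 * φ)) := by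
  rw [lam_im, sin_eq_mul_sinc φ, sin_eq_mul_sinc (2 * φ)]
  ring

theorem unstable_of_D_neg_general (gx gv : ℝ) (ρx ρv : ℤ → ℝ)
    (hx0 : ρx 0 = 1)
    (hxsum : ∑ j ∈ Finset.Icc (-2 : ℤ) 2, ρx j = 0)
    (hD : gv ^ 2 * ((ρv 1 - ρv (-1)) + 2 * (ρv 2 - ρv (-2))) ^ 2
        - 2 * gx * (4 + 3 * (ρx 1 + ρx (-1))) < 0) :
    ∃ ε > 0, ∀ φ : ℝ, 0 < φ → φ < ε →
      ∃ ν : ℂ, ν ^ 2 - lam gv ρv φ * ν - lam gx ρx φ = 0 ∧ 0 < ν.re := by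
  set G : ℝ → ℝ := fun φ ↦
    4 * -gx * ((ρx 1 + ρx (-1)) / 2 * sinc (φ / 2) ^ 2 + 2 * (ρx 2 + ρx (-2)) * sinc φ ^ 2)
      - (gv * ((ρv 1 - ρv (-1)) * sinc φ + 2 * (ρv 2 - ρv (-2)) * sinc (2 * φ))) ^ 2 with hG
  have hG0 : 0 < G 0 := by
    have hα : ρx 2 + ρx (-2) = -1 - (ρx 1 + ρx (-1)) := by
      rw [sum_Icc_neg_two_two, hx0] at hxsum
      linarith
    simp only [hG, zero_div, mul_zero, sinc_zero, hα]
    linarith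
  have hG_cont : Continuous G := by fun_prop
  obtain ⟨ε, hε, hε_pos⟩ :=
    Metric.eventually_nhds_iff.mp ((hG_cont.tendsto 0).eventually (lt_mem_nhds hG0))
  refine ⟨ε, hε, fun φ hφ hφε => exists_quadratic_root_re_pos_of_sq_im_lt _ _ ?_⟩
  have hGφ : 0 < G φ := hε_pos (by rwa [dist_0_eq_abs, abs_of_pos hφ])
  have hfactor : 4 * (lam gx ρx φ).re - (lam gv ρv φ).im ^ 2 = φ ^ 2 * G φ := by
    rw [lam_re_eq_of_sum_eq_zero gx hxsum, lam_im_eq_mul_sinc]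
    ring
  linarith [mul_pos (pow_pos hφ 2) hGφ]

/-- Corollary 1(i) of the paper: if `β_{x,1} + 2β_{x,2} = 0` and
`D = g_v²(β_{v,1}+2β_{v,2})² − 2g_x(4+3α_{x,1}) < 0`, then for all
sufficiently small `φ > 0` the characteristic equation has a root with
positive real part. -/
theorem unstable_of_D_neg (gx gv : ℝ) (ρx ρv : ℤ → ℝ)
    (hx0 : ρx 0 = 1) (hv0 : ρv 0 = 1)
    (hxsum : ∑ j ∈ Finset.Icc (-2 : ℤ) 2, ρx j = 0)
    (hvsum : ∑ j ∈ Finset.Icc (-2 : ℤ) 2, ρv j = 0)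
    (hbx : (ρx 1 - ρx (-1)) + 2 * (ρx 2 - ρx (-2)) = 0)
    (hD : gv ^ 2 * ((ρv 1 - ρv (-1)) + 2 * (ρv 2 - ρv (-2))) ^ 2
        - 2 * gx * (4 + 3 * (ρx 1 + ρx (-1))) < 0) :
    ∃ ε > 0, ∀ φ : ℝ, 0 < φ → φ < ε →
      ∃ ν : ℂ, ν ^ 2 - lam gv ρv φ * ν - lam gx ρx φ = 0 ∧ 0 < ν.re :=
  unstable_of_D_neg_general gx gv ρx ρv hx0 hxsum hD
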